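/- Let φ : ℝ → ℝ be a four-times continuously differentiable function that is bounded (there exists B ∈ ℝ such that |φ(t)| ≤ B for all t ∈ ℝ) and whose fourth derivative is nonnegative everywhere, i.e. φ⁗(t) ≥ 0 for all t ∈ ℝ. Then φ is constant. -/

import Mathlib

/-!
If the `n`-th derivative of `f` is monotone and positive at some point, it stays above a positive
constant on a half-line, and integrating `n` times forces `f → +∞`. For a bounded `f` this is
impossible, and the reflection `s ↦ -(-1)ⁿ f (-s)` excludes a negative value as well. So the
`n`-th derivative vanishes, the `(n - 1)`-st is constant, hence monotone, and we descend to
`f` itself. For `φ`, the third derivative is monotone because `φ⁗ ≥ 0`.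
-/

open Filter Set

theorem tendsto_atTop_of_eventually_const_le_deriv {f : ℝ → ℝ} (hf : Differentiable ℝ f)
    {c : ℝ} (hc : 0 < c) (hfc : ∀ᶠ t in atTop, c ≤ deriv f t) : Tendsto f atTop atTop := by
  obtain ⟨a, ha⟩ := eventually_atTop.1 hfc
  have hlin : ∀ t, a ≤ t → f a + c * (t - a) ≤ f t := fun t ht => by
    have := (convex_Ici a).mul_sub_le_image_sub_of_le_deriv hf.continuous.continuousOn
      hf.differentiableOn (fun x hx => ha x (interior_subset hx)) a self_mem_Ici t ht ht
    linarith
  refine tendsto_atTop_mono' atTop (eventually_atTop.2 ⟨a, hlin⟩) ?_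
  exact tendsto_atTop_add_const_left _ _
    ((tendsto_atTop_add_const_right _ _ tendsto_id).const_mul_atTop hc)

theorem tendsto_atTop_of_eventually_const_le_iteratedDeriv {n : ℕ} (hn : 1 ≤ n) {f : ℝ → ℝ}
    (hf : ContDiff ℝ n f) {c : ℝ} (hc : 0 < c) (hfc : ∀ᶠ t in atTop, c ≤ iteratedDeriv n f t) :
    Tendsto f atTop atTop := by
  induction n, hn using Nat.le_induction generalizing f with
  | base =>
    exact tendsto_atTop_of_eventually_const_le_deriv (hf.differentiable one_ne_zero) hc
      (by simpa using hfc)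
  | succ n hn ih =>
    have hf' : ContDiff ℝ (n + 1) f := by exact_mod_cast hf
    have hderiv : Tendsto (deriv f) atTop atTop :=
      ih hf'.deriv' (by rwa [iteratedDeriv_succ'] at hfc)
    exact tendsto_atTop_of_eventually_const_le_deriv (hf'.differentiable (by simp)) one_pos
      (hderiv.eventually_ge_atTop 1)

theorem iteratedDeriv_nonpos_of_monotone {n : ℕ} (hn : 1 ≤ n) {f : ℝ → ℝ}
    (hf : ContDiff ℝ n f) {B : ℝ} (hB : ∀ t, f t ≤ B) (hmono : Monotone (iteratedDeriv n f))
    (t : ℝ) : iteratedDeriv n f t ≤ 0 := by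
  by_contra! hpos
  have htend := tendsto_atTop_of_eventually_const_le_iteratedDeriv hn hf hpos
    (eventually_atTop.2 ⟨t, fun s hs => hmono hs⟩)
  obtain ⟨s, hs⟩ := (htend.eventually_gt_atTop B).exists
  exact (hB s).not_gt hs

theorem iteratedDeriv_eq_zero_of_monotone {n : ℕ} (hn : 1 ≤ n) {f : ℝ → ℝ}
    (hf : ContDiff ℝ n f) {B : ℝ} (hB : ∀ t, |f t| ≤ B) (hmono : Monotone (iteratedDeriv n f)) :
    iteratedDeriv n f = 0 := by
  set g : ℝ → ℝ := fun s => -(-1) ^ n * f (-s)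
  have hg : ∀ s, iteratedDeriv n g s = -iteratedDeriv n f (-s) := fun s => by
    simp [g, iteratedDeriv_comp_neg, ← mul_assoc, ← mul_pow]
  have hgB : ∀ s, g s ≤ B := fun s => by
    have hgs : |g s| = |f (-s)| := by simp [g, abs_mul]
    exact (le_abs_self (g s)).trans (hgs ▸ hB (-s))
  have hgmono : Monotone (iteratedDeriv n g) := fun a b hab => by
    simpa only [hg] using neg_le_neg (hmono (neg_le_neg hab))
  have hgf : ContDiff ℝ n g := contDiff_const.mul (hf.comp contDiff_neg)
  funext t
  refine le_antisymm (iteratedDeriv_nonpos_of_monotone hn hf (fun s => (abs_le.1 (hB s)).2)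
    hmono t) ?_
  have := iteratedDeriv_nonpos_of_monotone hn hgf hgB hgmono (-t)
  rw [hg, neg_neg] at this
  simpa using this

theorem is_const_of_bounded_of_monotone_iteratedDeriv {n : ℕ} (hn : 1 ≤ n) {f : ℝ → ℝ}
    (hf : ContDiff ℝ n f) {B : ℝ} (hB : ∀ t, |f t| ≤ B) (hmono : Monotone (iteratedDeriv n f)) :
    ∀ s t, f s = f t := by
  induction n, hn using Nat.le_induction with
  | base =>
    have hzero := iteratedDeriv_eq_zero_of_monotone le_rfl hf hB hmono
    exact is_const_of_deriv_eq_zero (hf.differentiable one_ne_zero) (by simpa using congrFun hzero)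
  | succ n hn ih =>
    have hzero := iteratedDeriv_eq_zero_of_monotone (by omega) hf hB hmono
    rw [iteratedDeriv_succ] at hzero
    have hconst : ∀ x y, iteratedDeriv n f x = iteratedDeriv n f y :=
      is_const_of_deriv_eq_zero (hf.differentiable_iteratedDeriv n (by norm_cast; omega))
        (congrFun hzero)
    exact ih (hf.of_le (by norm_cast; omega)) fun x y _ => (hconst x y).le

/-- A bounded `C⁴` function on `ℝ` whose fourth derivative is everywhere nonnegative
is constant. -/
theorem bounded_c4_nonneg_fourth_deriv_constant
    (φ : ℝ → ℝ) (hφ : ContDiff ℝ 4 φ)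
    (B : ℝ) (hB : ∀ t : ℝ, |φ t| ≤ B)
    (h4 : ∀ t : ℝ, 0 ≤ iteratedDeriv 4 φ t) :
    ∀ s t : ℝ, φ s = φ t := by
  have hφ3 : ContDiff ℝ (3 : ℕ) φ := hφ.of_le (by norm_num)
  have hmono : Monotone (iteratedDeriv 3 φ) :=
    monotone_of_deriv_nonneg (hφ.differentiable_iteratedDeriv 3 (by norm_num))
      fun t => by simpa only [iteratedDeriv_succ] using h4 t
  exact is_const_of_bounded_of_monotone_iteratedDeriv (by norm_num) hφ3 hB hmono
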